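/- Let L be a strongly locally connected frame and {𝔬(u_i)}_{i∈I} a family of open sublocales. Then the boundary of the join ⋁𝔬(u_i) is contained in the closure of the join of the boundaries: ∂(⋁𝔬(u_i)) ⊆ closure(⋁ ∂𝔬(u_i)). -/
import Mathlib


open Order Set

variable {L : Type*} [Order.Frame L]

/-- A sublocale of a frame: closed under arbitrary meets and under Heyting implication
from arbitrary elements. -/
def IsSublocale (S : Set L) : Prop :=
  (∀ M ⊆ S, sInf M ∈ S) ∧ ∀ x : L, ∀ s ∈ S, x ⇨ s ∈ S

/-- The open sublocale associated to `u`. -/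
def oSub (u : L) : Set L := {x | u ⇨ x = x}

/-- The closed sublocale associated to `u`. -/
def cSub (u : L) : Set L := Set.Ici u

/-- Binary join of sublocales. -/
def vee (A B : Set L) : Set L := {x | ∃ M ⊆ A ∪ B, x = sInf M}

/-- Join of a family of sublocales. -/
def iJoin {ι : Type*} (S : ι → Set L) : Set L := {x | ∃ M ⊆ ⋃ i, S i, x = sInf M}

/-- Two sublocales meet if their intersection is not the void sublocale `{⊤}`. -/
def Meets (S T : Set L) : Prop := S ∩ T ≠ ({⊤} : Set L)

/-- The closure of a sublocale. -/
def clo (S : Set L) : Set L := Set.Ici (sInf S)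

/-- The index of the interior: the largest `u` with `oSub u ⊆ S`. -/
def intIdx (S : Set L) : L := sSup {u | oSub u ⊆ S}

/-- The interior of a sublocale: the largest open sublocale contained in it. -/
def intr (S : Set L) : Set L := oSub (intIdx S)

/-- The boundary of a sublocale: closure minus interior
(computed as `clo S ∩ cSub (intIdx S)`, since `cSub (intIdx S)` is the complement of
the interior). -/
def bd (S : Set L) : Set L := clo S ∩ cSub (intIdx S)

/-- The supplement of a sublocale. -/
def suppl (S : Set L) : Set L := ⋂₀ {T | IsSublocale T ∧ vee T S = Set.univ}

/-- A sublocale is complemented if it is disjoint from its supplement. -/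
def ComplementedSub (S : Set L) : Prop := S ∩ suppl S = ({⊤} : Set L)

/-- A sublocale is connected if it admits no separation by two closed sublocales. -/
def SubConnected (S : Set L) : Prop :=
  ∀ a b : L, S ⊆ vee (cSub a) (cSub b) → S ∩ cSub a ∩ cSub b = ({⊤} : Set L) →
    S ∩ cSub a = ({⊤} : Set L) ∨ S ∩ cSub b = ({⊤} : Set L)

/-- Separated sublocales. -/
def SepSub (P Q : Set L) : Prop :=
  clo P ∩ Q = ({⊤} : Set L) ∧ P ∩ clo Q = ({⊤} : Set L)

/-- A connected element of a frame. -/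
def ConnElem (v : L) : Prop := ∀ b c : L, v = b ⊔ c → b ⊓ c = ⊥ → b = ⊥ ∨ c = ⊥

/-- A locally connected frame: every element is a join of connected elements. -/
def LocConn (L : Type*) [Order.Frame L] : Prop :=
  ∀ x : L, ∃ F : Set L, (∀ v ∈ F, ConnElem v) ∧ x = sSup F

/-- A strongly locally connected frame. -/
def StrLocConn (L : Type*) [Order.Frame L] : Prop :=
  ∀ u : L, ∀ x ∈ oSub u, ∃ v : L, SubConnected (oSub v) ∧ oSub v ⊆ oSub u ∧ x ∈ oSub v

/-- A component of a sublocale `T`: a nonvoid connected sublocale, maximal among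
connected sublocales of `T`. -/
def IsComponent (D T : Set L) : Prop :=
  IsSublocale D ∧ D ⊆ T ∧ D ≠ ({⊤} : Set L) ∧ SubConnected D ∧
    ∀ S : Set L, IsSublocale S → S ⊆ T → SubConnected S → Meets S D → S ⊆ D

/-- Normally separated sublocales. -/
def NormSep (S T : Set L) : Prop :=
  ∃ u v : L, oSub u ∩ oSub v = ({⊤} : Set L) ∧ S ⊆ oSub u ∧ T ⊆ oSub v

/-- Normally connected sublocale. -/
def NormConn (C : Set L) : Prop :=
  ∀ S T : Set L, IsSublocale S → IsSublocale T → vee S T = C → NormSep S T →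
    S = ({⊤} : Set L) ∨ T = ({⊤} : Set L)

/-- A simple sublocale: complemented with both itself and its supplement connected. -/
def SimpleSub (S : Set L) : Prop :=
  IsSublocale S ∧ ComplementedSub S ∧ SubConnected S ∧ SubConnected (suppl S)


/-- Open sublocales are monotone in the index. -/
lemma oSub_mono {v u : L} (hvu : v ≤ u) : oSub v ⊆ oSub u := by
  intro x hx
  simp only [oSub, mem_setOf_eq] at *
  exact le_antisymm (le_of_le_of_eq (himp_le_himp_right hvu) hx) le_himp

/-- Inclusion of open sublocales forces inequality of indices. -/
lemma le_of_oSub_subset {v u : L} (hs : oSub v ⊆ oSub u) : v ≤ u := by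
  have hx : v ⇨ (v ⊓ u) ∈ oSub v := by
    simp only [oSub, mem_setOf_eq, himp_himp, inf_idem]
  have h2 : u ⇨ (v ⇨ (v ⊓ u)) = v ⇨ (v ⊓ u) := hs hx
  have h3 : u ⇨ (v ⇨ (v ⊓ u)) = ⊤ := by
    rw [himp_himp]
    exact himp_eq_top_iff.2 (by rw [inf_comm])
  have h4 : v ≤ v ⊓ u := himp_eq_top_iff.1 (h2 ▸ h3)
  exact h4.trans inf_le_right

/-- The bottom of an open sublocale is the pseudocomplement. -/
lemma sInf_oSub (u : L) : sInf (oSub u) = u ⇨ ⊥ := by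
  apply le_antisymm
  · exact sInf_le (by simp only [oSub, mem_setOf_eq, himp_himp, inf_idem])
  · refine le_sInf fun x hx => ?_
    simp only [oSub, mem_setOf_eq] at hx
    exact (himp_le_himp_left bot_le).trans_eq hx

/-- The interior index of an open sublocale is its defining element. -/
lemma intIdx_oSub (u : L) : intIdx (oSub u) = u := by
  apply le_antisymm
  · exact sSup_le fun v hv => le_of_oSub_subset hv
  · exact le_sSup (subset_rfl : oSub u ⊆ oSub u)

/-- The boundary of an open sublocale. -/
lemma bd_oSub (u : L) : bd (oSub u) = Set.Ici ((u ⇨ ⊥) ⊔ u) := by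
  rw [bd, clo, sInf_oSub, cSub, intIdx_oSub, Ici_inter_Ici]

/-- An open sublocale meets a closed sublocale voidly iff the index inequality holds. -/
lemma oSub_inter_cSub_eq {v a : L} (hva : oSub v ∩ cSub a = ({⊤} : Set L)) : v ≤ a := by
  have hmem : v ⇨ a ∈ oSub v ∩ cSub a :=
    ⟨by simp only [oSub, mem_setOf_eq, himp_himp, inf_idem], le_himp⟩
  rw [hva, mem_singleton_iff] at hmem
  exact himp_eq_top_iff.1 hmem

/-- Connectedness of an open sublocale gives connectedness of its index element. -/
lemma connElem_of_subConnected {v : L} (hc : SubConnected (oSub v)) {b c : L}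
    (hv : v = b ⊔ c) (hbc : b ⊓ c = ⊥) : b = ⊥ ∨ c = ⊥ := by
  have h1 : oSub v ⊆ vee (cSub c) (cSub b) := by
    intro x hx
    simp only [oSub, mem_setOf_eq] at hx
    refine ⟨{b ⇨ x, c ⇨ x}, ?_, ?_⟩
    · rintro y hy
      rcases hy with rfl | hy
      · exact Or.inl (le_himp_iff.2 ((inf_comm c b ▸ hbc) ▸ bot_le))
      · rw [mem_singleton_iff] at hy
        subst hy
        exact Or.inr (le_himp_iff.2 (hbc ▸ bot_le))
    · rw [sInf_pair, ← sup_himp_distrib, ← hv, hx]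
  have h2 : oSub v ∩ cSub c ∩ cSub b = ({⊤} : Set L) := by
    ext x
    simp only [mem_inter_iff, mem_singleton_iff, oSub, cSub, mem_setOf_eq, mem_Ici]
    constructor
    · rintro ⟨⟨hx, hcx⟩, hbx⟩
      have hvx : v ≤ x := hv ▸ sup_le hbx hcx
      rw [← hx]
      exact himp_eq_top_iff.2 hvx
    · rintro rfl
      exact ⟨⟨himp_top, le_top⟩, le_top⟩
  rcases hc c b h1 h2 with hcase | hcase
  · have hvc : v ≤ c := oSub_inter_cSub_eq hcase
    refine Or.inl (le_bot_iff.1 ?_)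
    rw [← hbc]
    exact le_inf le_rfl ((hv ▸ (le_sup_left : b ≤ b ⊔ c)).trans hvc)
  · have hvb : v ≤ b := oSub_inter_cSub_eq hcase
    refine Or.inr (le_bot_iff.1 ?_)
    rw [← hbc]
    exact le_inf ((hv ▸ (le_sup_right : c ≤ b ⊔ c)).trans hvb) le_rfl

/-- In a strongly locally connected frame, every element is covered by the indices of
connected open sublocales below it. -/
lemma le_sSup_connected (h : StrLocConn L) (w : L) :
    w ≤ sSup {v : L | SubConnected (oSub v) ∧ v ≤ w} := by
  set s := sSup {v : L | SubConnected (oSub v) ∧ v ≤ w} with hs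
  have hx : w ⇨ s ∈ oSub w := by
    simp only [oSub, mem_setOf_eq, himp_himp, inf_idem]
  obtain ⟨v, hvc, hvsub, hvx⟩ := h w _ hx
  have hvw : v ≤ w := le_of_oSub_subset hvsub
  have hvs : v ≤ s := le_sSup ⟨hvc, hvw⟩
  simp only [oSub, mem_setOf_eq, himp_himp] at hvx
  have htop : (v ⊓ w) ⇨ s = ⊤ := himp_eq_top_iff.2 (inf_le_left.trans hvs)
  exact himp_eq_top_iff.1 (hvx ▸ htop)

theorem stmt19 (h : StrLocConn L) {ι : Type*} (u : ι → L) :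
    bd (oSub (⨆ i, u i)) ⊆ clo (iJoin fun i => bd (oSub (u i))) := by
  set U := ⨆ i, u i with hU
  intro x hx
  rw [bd_oSub] at hx
  -- hx : (U ⇨ ⊥) ⊔ U ≤ x
  rw [clo, mem_Ici]
  set w := ⨅ i, ((u i ⇨ ⊥) ⊔ u i) with hw
  -- Step 1 : sInf (iJoin ...) ≤ w
  have h1 : sInf (iJoin fun i => bd (oSub (u i))) ≤ w := by
    refine le_iInf fun i => ?_
    have hmem : (u i ⇨ ⊥) ⊔ u i ∈ iJoin fun i => bd (oSub (u i)) := by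
      refine ⟨{(u i ⇨ ⊥) ⊔ u i}, ?_, by simp⟩
      intro y hy
      rw [mem_singleton_iff] at hy
      subst hy
      exact mem_iUnion.2 ⟨i, by rw [bd_oSub]; exact self_mem_Ici⟩
    exact sInf_le hmem
  -- Step 2 : w ≤ (U ⇨ ⊥) ⊔ U
  have h2 : w ≤ (U ⇨ ⊥) ⊔ U := by
    refine (le_sSup_connected h w).trans (sSup_le ?_)
    rintro v ⟨hvc, hvw⟩
    by_cases hvU : v ⊓ U = ⊥
    · exact le_sup_of_le_left (le_himp_iff.2 (hvU ▸ le_rfl))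
    · have : ∃ j, v ⊓ u j ≠ ⊥ := by
        by_contra hcon
        push_neg at hcon
        apply hvU
        rw [hU, inf_iSup_eq]
        exact iSup_eq_bot.2 hcon
      obtain ⟨j, hj⟩ := this
      have hvj : v ≤ (u j ⇨ ⊥) ⊔ u j := hvw.trans (iInf_le _ j)
      have hsplit : v = (v ⊓ (u j ⇨ ⊥)) ⊔ (v ⊓ u j) := by
        rw [← inf_sup_left, inf_eq_left.2 hvj]
      have hdisj : (v ⊓ (u j ⇨ ⊥)) ⊓ (v ⊓ u j) = ⊥ := by
        apply le_bot_iff.1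
        calc (v ⊓ (u j ⇨ ⊥)) ⊓ (v ⊓ u j) ≤ (u j ⇨ ⊥) ⊓ u j :=
              inf_le_inf inf_le_right inf_le_right
          _ = u j ⊓ (u j ⇨ ⊥) := inf_comm _ _
          _ = u j ⊓ ⊥ := inf_himp _ _
          _ = ⊥ := inf_bot_eq _
      rcases connElem_of_subConnected hvc hsplit hdisj with hcase | hcase
      · have hvuj : v ≤ u j := by
          conv_lhs => rw [hsplit, hcase, bot_sup_eq]
          exact inf_le_right
        exact le_sup_of_le_right (hvuj.trans (le_iSup u j))
      · exact absurd hcase hj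
  exact h1.trans (h2.trans hx)
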